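/- Suppose F = f + Ψ where f : ℝⁿ → ℝ is convex and L-smooth (L > 0) and Ψ : ℝⁿ → ℝ ∪ {+∞} is proper, closed and convex. If points x, z ∈ ℝⁿ satisfy −⟨G_{1/L}(z), x − z⟩ ≤ 0, then F(z̄) ≤ F(x) − (1/(2L))‖G_{1/L}(z)‖², where z̄ = z − G_{1/L}(z)/L. -/

import Mathlib

/-!
With `p = z - G/L` the forward-backward point, the optimality of `p` for the proximal
subproblem gives `Ψ p ≤ Ψ x - ⟪G - ∇f z, x - p⟫`. Adding the descent lemma
`f p ≤ f z + ⟪∇f z, p - z⟫ + (L/2)‖p - z‖²` and the gradient inequality of the convex `f` at `z`,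
the gradient terms cancel and what remains is `F p ≤ F x - ⟪G, x - z⟫ - ‖G‖²/(2L)`.
-/

open scoped RealInnerProductSpace
open Set Filter Topology

theorem ConvexOn.add_le_of_hasFDerivAt {E : Type*} [NormedAddCommGroup E] [NormedSpace ℝ E]
    {s : Set E} {f : E → ℝ} {f' : E →L[ℝ] ℝ} {x z : E} (hf : ConvexOn ℝ s f)
    (hz : z ∈ s) (hx : x ∈ s) (hd : HasFDerivAt f f' z) :
    f z + f' (x - z) ≤ f x := by
  set φ : ℝ →ᵃ[ℝ] E := AffineMap.lineMap z x
  have hline : ConvexOn ℝ (φ ⁻¹' s) (f ∘ φ) := hf.comp_affineMap φ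
  have hderiv : HasDerivAt (f ∘ φ) (f' (x - z)) 0 := by
    have hφ : HasDerivAt φ (x - z) 0 := AffineMap.hasDerivAt_lineMap
    exact (by simpa [φ] using hd : HasFDerivAt f f' (φ 0)).comp_hasDerivAt 0 hφ
  have hslope := hline.le_slope_of_hasDerivAt (by simpa [φ] using hz) (by simpa [φ] using hx)
    one_pos hderiv
  simp only [slope_def_field, Function.comp_apply, φ, AffineMap.lineMap_apply_one,
    AffineMap.lineMap_apply_zero, sub_zero, div_one] at hslope
  linarith

theorem le_of_forall_mem_Ioo_le_add_mul {a b c : ℝ} (h : ∀ s ∈ Ioo (0 : ℝ) 1, a ≤ b + s * c) :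
    a ≤ b := by
  have hlim : Tendsto (fun s : ℝ => b + s * c) (𝓝[>] 0) (𝓝 b) := by
    have : Continuous fun s : ℝ => b + s * c := by fun_prop
    simpa using (this.tendsto 0).mono_left nhdsWithin_le_nhds
  exact ge_of_tendsto hlim (by filter_upwards [Ioo_mem_nhdsGT one_pos] using h)

theorem EReal.coe_add_le_coe_add_sub {a b c d : ℝ} {ψ₁ ψ₂ : EReal} (hψ : ψ₁ + c ≤ ψ₂)
    (h : a - c ≤ b - d) : a + ψ₁ ≤ b + ψ₂ - d :=
  calc (a : EReal) + ψ₁ = ((a - c : ℝ) : EReal) + (ψ₁ + c) := by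
        rw [add_left_comm, ← EReal.coe_add, _root_.sub_add_cancel, add_comm]
    _ ≤ ((b - d : ℝ) : EReal) + ψ₂ := add_le_add (EReal.coe_le_coe_iff.2 h) hψ
    _ = b + ψ₂ - d := by
        rw [EReal.coe_sub, sub_eq_add_neg, sub_eq_add_neg, add_right_comm]

section Prox

variable {E : Type*} [NormedAddCommGroup E] [InnerProductSpace ℝ E]

def IsProxPoint (Ψ : E → EReal) (t : ℝ) (w p : E) : Prop :=
  ∀ u, Ψ p + ((‖w - p‖ ^ 2 / (2 * t) : ℝ) : EReal) ≤ Ψ u + ((‖w - u‖ ^ 2 / (2 * t) : ℝ) : EReal)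

/-- Here `a = Ψ p`, `b = Ψ x`, and the hypothesis compares `p` with the segment `[p, x]`, on which
convexity bounds `Ψ`; letting the point tend to `p` gives the optimality condition. -/
theorem add_inner_div_le_of_forall_mem_Ioo {t a b : ℝ} (ht : 0 < t) {w p x : E}
    (h : ∀ s ∈ Ioo (0 : ℝ) 1, a + ‖w - p‖ ^ 2 / (2 * t)
      ≤ (1 - s) * a + s * b + ‖w - (p + s • (x - p))‖ ^ 2 / (2 * t)) :
    a + ⟪w - p, x - p⟫ / t ≤ b := by
  refine le_of_forall_mem_Ioo_le_add_mul (c := ‖x - p‖ ^ 2 / (2 * t)) fun s hs => ?_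
  have hexpand : ‖w - (p + s • (x - p))‖ ^ 2
      = ‖w - p‖ ^ 2 - 2 * s * ⟪w - p, x - p⟫ + s ^ 2 * ‖x - p‖ ^ 2 := by
    rw [← sub_sub, norm_sub_sq_real, real_inner_smul_right, norm_smul, Real.norm_eq_abs,
      abs_of_pos hs.1]
    ring
  have hs_ineq := h s hs
  rw [hexpand] at hs_ineq
  refine le_of_mul_le_mul_left ?_ hs.1
  field_simp
  field_simp at hs_ineq
  nlinarith

theorem IsProxPoint.add_inner_div_le {Ψ : E → EReal}
    (hconvex : ∀ x y : E, ∀ a b : ℝ, 0 ≤ a → 0 ≤ b → a + b = 1 →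
      Ψ (a • x + b • y) ≤ (a : EReal) * Ψ x + (b : EReal) * Ψ y)
    {t : ℝ} (ht : 0 < t) {w p : E} (hp : IsProxPoint Ψ t w p) (x : E) :
    Ψ p + ((⟪w - p, x - p⟫ / t : ℝ) : EReal) ≤ Ψ x := by
  rcases eq_top_or_lt_top (Ψ x) with hx_top | hx_top
  · simp [hx_top]
  rcases eq_bot_or_bot_lt (Ψ p) with hp_bot | hp_bot
  · simp [hp_bot]
  have hpx := hp x
  have hp_top : Ψ p ≠ ⊤ := by
    intro h
    rw [h, EReal.top_add_coe] at hpx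
    exact (EReal.add_lt_top hx_top.ne (EReal.coe_ne_top _)).not_ge hpx
  have hx_bot : Ψ x ≠ ⊥ := by
    intro h
    rw [h, EReal.bot_add, le_bot_iff, EReal.add_eq_bot_iff] at hpx
    exact hpx.elim hp_bot.ne' (EReal.coe_ne_bot _)
  obtain ⟨a, ha⟩ : ∃ a : ℝ, Ψ p = a := ⟨_, (EReal.coe_toReal hp_top hp_bot.ne').symm⟩
  obtain ⟨b, hb⟩ : ∃ b : ℝ, Ψ x = b := ⟨_, (EReal.coe_toReal hx_top.ne hx_bot).symm⟩
  rw [ha, hb, ← EReal.coe_add, EReal.coe_le_coe_iff]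
  refine add_inner_div_le_of_forall_mem_Ioo ht fun s hs => ?_
  have hseg : Ψ (p + s • (x - p)) ≤ ((1 - s) * a + s * b : ℝ) := by
    have := hconvex p x (1 - s) s (by linarith [hs.2]) hs.1.le (by ring)
    rwa [ha, hb, ← EReal.coe_mul, ← EReal.coe_mul, ← EReal.coe_add,
      show (1 - s) • p + s • x = p + s • (x - p) by module] at this
  have := (hp (p + s • (x - p))).trans (add_le_add_left hseg _)
  rwa [ha, ← EReal.coe_add, ← EReal.coe_add, EReal.coe_le_coe_iff] at this

end Prox

theorem prox_gradient_sufficient_decrease_general {n : ℕ} (L : ℝ) (hL : 0 < L)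
    (f : EuclideanSpace ℝ (Fin n) → ℝ)
    (f' : EuclideanSpace ℝ (Fin n) → EuclideanSpace ℝ (Fin n))
    (hdiff : ∀ x, HasGradientAt f (f' x) x)
    (hfconvex : ConvexOn ℝ Set.univ f)
    (hsmooth : ∀ x y : EuclideanSpace ℝ (Fin n),
      |f x - f y - ⟪f' y, x - y⟫| ≤ L / 2 * ‖x - y‖ ^ 2)
    (Ψ : EuclideanSpace ℝ (Fin n) → EReal)
    (hconvex : ∀ x y : EuclideanSpace ℝ (Fin n), ∀ a b : ℝ, 0 ≤ a → 0 ≤ b → a + b = 1 →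
      Ψ (a • x + b • y) ≤ (a : EReal) * Ψ x + (b : EReal) * Ψ y)
    (prox : ℝ → EuclideanSpace ℝ (Fin n) → EuclideanSpace ℝ (Fin n))
    (hprox : ∀ t : ℝ, 0 < t → ∀ x z : EuclideanSpace ℝ (Fin n),
      Ψ (prox t x) + ((‖x - prox t x‖ ^ 2 / (2 * t) : ℝ) : EReal)
        ≤ Ψ z + ((‖x - z‖ ^ 2 / (2 * t) : ℝ) : EReal))
    (F : EuclideanSpace ℝ (Fin n) → EReal)
    (hF : ∀ x, F x = (f x : EReal) + Ψ x)
    (G : ℝ → EuclideanSpace ℝ (Fin n) → EuclideanSpace ℝ (Fin n))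
    (hG : ∀ t x, G t x = t⁻¹ • (x - prox t (x - t • f' x)))
    (x z : EuclideanSpace ℝ (Fin n))
    (hsign : -⟪G (1 / L) z, x - z⟫ ≤ 0) :
    F (z - (1 / L) • G (1 / L) z)
      ≤ F x - ((1 / (2 * L) * ‖G (1 / L) z‖ ^ 2 : ℝ) : EReal) := by
  set t := 1 / L
  have ht : 0 < t := by positivity
  set g := G t z
  set w := z - t • f' z
  set p := z - t • g
  have hp : prox t w = p := by
    simp only [p, g, w, hG, smul_inv_smul₀ ht.ne', sub_sub_cancel]
  have hΨ := IsProxPoint.add_inner_div_le hconvex ht (hp ▸ hprox t ht w) x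
  have hupper : f p ≤ f z + ⟪f' z, p - z⟫ + L / 2 * ‖p - z‖ ^ 2 := by
    linarith [le_abs_self (f p - f z - ⟪f' z, p - z⟫), hsmooth p z]
  have hlower : f z + ⟪f' z, x - z⟫ ≤ f x :=
    hfconvex.add_le_of_hasFDerivAt (mem_univ z) (mem_univ x) (hdiff z).hasFDerivAt
  rw [hF, hF]
  refine EReal.coe_add_le_coe_add_sub hΨ ?_
  have hwp : w - p = t • (g - f' z) := by simp only [w, p, smul_sub]; abel
  have hxp : x - p = (x - z) + t • g := by simp only [p]; abel
  rw [show p - z = -(t • g) by simp [p], norm_neg, norm_smul, Real.norm_of_nonneg ht.le,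
    inner_neg_right, real_inner_smul_right] at hupper
  rw [hwp, hxp, real_inner_smul_left, inner_sub_left, inner_add_right, inner_add_right,
    real_inner_smul_right, real_inner_smul_right, real_inner_self_eq_norm_sq,
    mul_div_cancel_left₀ _ ht.ne', show 1 / (2 * L) = t / 2 by simp [t]; ring]
  have htL : t * L = 1 := by simp [t, hL.ne']
  linear_combination hupper + hlower + hsign + (t * ‖g‖ ^ 2 / 2) * htL

/-- sufficient decrease of the composite objective at the
forward-backward point `z̄` relative to `F(x)` under the sign condition. -/
theorem prox_gradient_sufficient_decrease {n : ℕ} (L : ℝ) (hL : 0 < L)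
    (f : EuclideanSpace ℝ (Fin n) → ℝ)
    (f' : EuclideanSpace ℝ (Fin n) → EuclideanSpace ℝ (Fin n))
    (hdiff : ∀ x, HasGradientAt f (f' x) x)
    (hfconvex : ConvexOn ℝ Set.univ f)
    (hsmooth : ∀ x y : EuclideanSpace ℝ (Fin n),
      |f x - f y - ⟪f' y, x - y⟫| ≤ L / 2 * ‖x - y‖ ^ 2)
    (Ψ : EuclideanSpace ℝ (Fin n) → EReal)
    (hproper : (∀ x, Ψ x ≠ ⊥) ∧ (∃ x, Ψ x ≠ ⊤))
    (hclosed : LowerSemicontinuous Ψ)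
    (hconvex : ∀ x y : EuclideanSpace ℝ (Fin n), ∀ a b : ℝ, 0 ≤ a → 0 ≤ b → a + b = 1 →
      Ψ (a • x + b • y) ≤ (a : EReal) * Ψ x + (b : EReal) * Ψ y)
    (prox : ℝ → EuclideanSpace ℝ (Fin n) → EuclideanSpace ℝ (Fin n))
    (hprox : ∀ t : ℝ, 0 < t → ∀ x z : EuclideanSpace ℝ (Fin n),
      Ψ (prox t x) + ((‖x - prox t x‖ ^ 2 / (2 * t) : ℝ) : EReal)
        ≤ Ψ z + ((‖x - z‖ ^ 2 / (2 * t) : ℝ) : EReal))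
    (F : EuclideanSpace ℝ (Fin n) → EReal)
    (hF : ∀ x, F x = (f x : EReal) + Ψ x)
    (G : ℝ → EuclideanSpace ℝ (Fin n) → EuclideanSpace ℝ (Fin n))
    (hG : ∀ t x, G t x = t⁻¹ • (x - prox t (x - t • f' x)))
    (x z : EuclideanSpace ℝ (Fin n))
    (hsign : -⟪G (1 / L) z, x - z⟫ ≤ 0) :
    F (z - (1 / L) • G (1 / L) z)
      ≤ F x - ((1 / (2 * L) * ‖G (1 / L) z‖ ^ 2 : ℝ) : EReal) :=
  prox_gradient_sufficient_decrease_general L hL f f' hdiff hfconvex hsmooth Ψ hconvex prox hprox F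
    hF G hG x z hsign
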